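/- For any V-graph d on X, α_X(γ_X(d)) is the least V-category structure on X above d: it is a V-category, satisfies d ⊑ α_X(γ_X(d)), and for any V-category d′ on X with d ⊑ d′ one has α_X(γ_X(d)) ⊑ d′. -/

import Mathlib

/-!
Each residual `dres (f x) (f y)` is reflexive and transitive in `x, y`, and both properties survive
the infimum over `f ∈ S`, so `alphaMap S` is a `V`-category for every `S`; it lies above `d` because
every `f ∈ gammaMap d` is `d`-non-expansive. For minimality, transitivity of a `V`-category `d'`
makes each representable predicate `d' x` non-expansive for `d'`, hence for `d ≤ d'`, and then
`alphaMap (gammaMap d) x y ≤ dres (d' x x) (d' x y) ≤ d' x y` because `1 ≤ d' x x`.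
-/

variable {V X : Type*}

/-- Residuation (internal hom) of a quantale. -/
def dres [CommMonoid V] [CompleteLattice V] (a c : V) : V := sSup {u | u * a ≤ c}

/-- From a set of `V`-valued predicates, the greatest conformance making them non-expansive. -/
def alphaMap [CommMonoid V] [CompleteLattice V] (S : Set (X → V)) : X → X → V :=
  fun x₁ x₂ => ⨅ f ∈ S, dres (f x₁) (f x₂)

/-- The set of predicates non-expansive w.r.t. a `V`-graph `d`. -/
def gammaMap [CommMonoid V] [CompleteLattice V] (d : X → X → V) : Set (X → V) :=
  {f | ∀ x₁ x₂, d x₁ x₂ ≤ dres (f x₁) (f x₂)}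

section

variable [CommMonoid V] [CompleteLattice V] {S : Set (X → V)}

theorem le_alphaMap_iff {u : V} {x y : X} :
    u ≤ alphaMap S x y ↔ ∀ f ∈ S, u ≤ dres (f x) (f y) :=
  le_iInf₂_iff

theorem alphaMap_le_dres {f : X → V} (hf : f ∈ S) (x y : X) :
    alphaMap S x y ≤ dres (f x) (f y) :=
  iInf₂_le f hf

theorem le_alphaMap_gammaMap (d : X → X → V) (x y : X) : d x y ≤ alphaMap (gammaMap d) x y :=
  le_alphaMap_iff.2 fun _ hf => hf x y

theorem gammaMap_subset_of_le {d d' : X → X → V} (hle : ∀ x y, d x y ≤ d' x y) :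
    gammaMap d' ⊆ gammaMap d :=
  fun _ hf x y => (hle x y).trans (hf x y)

end

section Quantale

variable [CommMonoid V] [CompleteLattice V] [IsQuantale V] {S : Set (X → V)}

theorem le_dres_iff {u a c : V} : u ≤ dres a c ↔ u * a ≤ c :=
  Quantale.leftMulResiduation_le_iff_mul_le

theorem dres_mul_le (a c : V) : dres a c * a ≤ c :=
  le_dres_iff.1 le_rfl

theorem one_le_dres_self (a : V) : 1 ≤ dres a a :=
  le_dres_iff.2 (one_mul a).le

theorem dres_mul_dres_le (a b c : V) : dres a b * dres b c ≤ dres a c :=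
  le_dres_iff.2 <| calc
    dres a b * dres b c * a = dres b c * (dres a b * a) := by rw [mul_comm (dres a b), mul_assoc]
    _ ≤ dres b c * b := mul_le_mul_right (dres_mul_le a b) _
    _ ≤ c := dres_mul_le b c

theorem dres_le_of_one_le {a : V} (ha : 1 ≤ a) (c : V) : dres a c ≤ c := calc
  dres a c = dres a c * 1 := (mul_one _).symm
  _ ≤ dres a c * a := mul_le_mul_right ha _
  _ ≤ c := dres_mul_le a c

theorem one_le_alphaMap_self (x : X) : 1 ≤ alphaMap S x x :=
  le_alphaMap_iff.2 fun f _ => one_le_dres_self (f x)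

theorem alphaMap_mul_alphaMap_le (x y z : X) :
    alphaMap S x y * alphaMap S y z ≤ alphaMap S x z :=
  le_alphaMap_iff.2 fun _ hf =>
    (mul_le_mul' (alphaMap_le_dres hf x y) (alphaMap_le_dres hf y z)).trans (dres_mul_dres_le ..)

theorem apply_mem_gammaMap {d : X → X → V} (htrans : ∀ x y z, d x y * d y z ≤ d x z) (x : X) :
    d x ∈ gammaMap d :=
  fun a b => le_dres_iff.2 <| (mul_comm (d a b) (d x a)).trans_le (htrans x a b)

theorem alphaMap_gammaMap_le {d d' : X → X → V} (hrefl : ∀ x, 1 ≤ d' x x)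
    (htrans : ∀ x y z, d' x y * d' y z ≤ d' x z) (hle : ∀ x y, d x y ≤ d' x y) (x y : X) :
    alphaMap (gammaMap d) x y ≤ d' x y :=
  (alphaMap_le_dres (gammaMap_subset_of_le hle (apply_mem_gammaMap htrans x)) x y).trans
    (dres_le_of_one_le (hrefl x) _)

end Quantale

theorem stmt15 [CommMonoid V] [CompleteLattice V] [IsQuantale V]
    (d : X → X → V) :
    (∀ x, (1 : V) ≤ alphaMap (gammaMap d) x x) ∧
    (∀ x y z, alphaMap (gammaMap d) x y * alphaMap (gammaMap d) y z ≤ alphaMap (gammaMap d) x z) ∧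
    (∀ x₁ x₂, d x₁ x₂ ≤ alphaMap (gammaMap d) x₁ x₂) ∧
    (∀ d' : X → X → V, (∀ x, (1 : V) ≤ d' x x) → (∀ x y z, d' x y * d' y z ≤ d' x z) →
      (∀ x₁ x₂, d x₁ x₂ ≤ d' x₁ x₂) →
      ∀ x₁ x₂, alphaMap (gammaMap d) x₁ x₂ ≤ d' x₁ x₂) :=
  ⟨one_le_alphaMap_self, alphaMap_mul_alphaMap_le, le_alphaMap_gammaMap d,
    fun _ hrefl htrans hle => alphaMap_gammaMap_le hrefl htrans hle⟩
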